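/- If φ ∈ Strat([p,Q]_a, e) for the weak spectroscopy energy game G△, then φ distinguishes p from Q. -/
import Mathlib


open Classical

noncomputable section

namespace Spectroscopy

/-! ### Energies and declining energy games -/

/-- Energies: 8-dimensional vectors over `ℕ ∪ {∞}`, ordered componentwise. -/
abbrev Energy : Type := Fin 8 → ℕ∞

/-- The `i`-th unit vector. -/
def unitE (i : Fin 8) : Energy := fun k => if k = i then 1 else 0

/-- The vector with value `v` at position `i` and `0` elsewhere. -/
def onlyAt (i : Fin 8) (v : ℕ∞) : Energy := fun k => if k = i then v else 0

/-- Components of energy updates: `-1`, `0`, or minimum selection `min_D`.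
For the component at position `k`, `minWith D` selects the minimum over the
positions `{k} ∪ D`, so the requirement `k ∈ D` of the paper holds by
construction. -/
inductive UpdComp : Type
  | decr : UpdComp
  | zero : UpdComp
  | minWith (D : Finset (Fin 8)) : UpdComp
deriving DecidableEq

/-- Energy updates. -/
abbrev Update : Type := Fin 8 → UpdComp

/-- Partial application of an update to an energy (`none` when a component
would become negative). -/
def upd (e : Energy) (u : Update) : Option Energy :=
  if ∀ k, u k = UpdComp.decr → e k ≠ 0 then
    some (fun k =>
      match u k with
      | UpdComp.decr => e k - 1
      | UpdComp.zero => e k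
      | UpdComp.minWith D => (insert k D).inf e)
  else none

/-- A declining energy game: positions, a defender predicate (attacker
positions are the non-defender ones), and moves labeled with updates. -/
structure EGame (Pos : Type) where
  defender : Pos → Prop
  move : Pos → Update → Pos → Prop

/-- Attacker winning budgets `Win_a`: at an attacker position some move must
lead to an attacker-won position under the updated energy; at a defender
position every move must (be defined and) lead to an attacker-won position. -/
inductive EGame.Win {Pos : Type} (G : EGame Pos) : Pos → Energy → Prop
  | attack {g : Pos} {u : Update} {g' : Pos} {e e' : Energy} :
      ¬ G.defender g → G.move g u g' → upd e u = some e' → G.Win g' e' →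
      G.Win g e
  | defend {g : Pos} {e : Energy} :
      G.defender g →
      (∀ u g', G.move g u g' → upd e u ≠ none) →
      (∀ u g' e', G.move g u g' → upd e u = some e' → G.Win g' e') →
      G.Win g e

/-! ### Labeled transition systems with silent steps -/

section LTS

variable {Proc Act : Type}

/-- Weak internal steps `↠`: reflexive-transitive closure of `τ`-steps. -/
def Star (Tr : Proc → Act → Proc → Prop) (τ : Act) : Proc → Proc → Prop :=
  Relation.ReflTransGen fun p p' => Tr p τ p'

/-- A process is stable if it has no `τ`-step. -/
def Stable (Tr : Proc → Act → Proc → Prop) (τ : Act) (p : Proc) : Prop :=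
  ∀ p', ¬ Tr p τ p'

/-- Optional step `p →(α) p'`: a real `α`-step, or `α = τ` and `p = p'`. -/
def OptStep (Tr : Proc → Act → Proc → Prop) (τ : Act) (p : Proc) (α : Act) (p' : Proc) : Prop :=
  Tr p α p' ∨ (α = τ ∧ p = p')

/-- Lift of `→a` to sets. -/
def SetStep (Tr : Proc → Act → Proc → Prop) (Q : Set Proc) (a : Act) (Q' : Set Proc) : Prop :=
  Q' = {q' | ∃ q ∈ Q, Tr q a q'}

/-- Lift of `↠` to sets. -/
def SetStar (Tr : Proc → Act → Proc → Prop) (τ : Act) (Q Q' : Set Proc) : Prop :=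
  Q' = {q' | ∃ q ∈ Q, Star Tr τ q q'}

/-- Lift of `→(α)` to sets. -/
def SetOpt (Tr : Proc → Act → Proc → Prop) (τ : Act) (Q : Set Proc) (α : Act)
    (Q' : Set Proc) : Prop :=
  Q' = {q' | ∃ q ∈ Q, OptStep Tr τ q α q'}

end LTS

/-! ### The logic HML_srbb -/

mutual
/-- Formulas `φ` of HML_srbb: `⟨ε⟩χ` or immediate conjunctions `⋀Ψ`
(conjunctions are indexed by an arbitrary type). `⊤` is the empty conjunction. -/
inductive Formula (Act : Type) (τ : Act) : Type 1
  | delayed : DFormula Act τ → Formula Act τ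
  | conj : (I : Type) → (I → Conjunct Act τ) → Formula Act τ

/-- Delayed formulas `χ`: observations `⟨a⟩φ` (with `a ≠ τ`), standard
conjunctions `⋀Ψ`, stable conjunctions `⋀({¬⟨τ⟩⊤} ∪ Ψ)`, and branching
conjunctions `⋀({(α)φ} ∪ Ψ)`. -/
inductive DFormula (Act : Type) (τ : Act) : Type 1
  | obs : (a : Act) → a ≠ τ → Formula Act τ → DFormula Act τ
  | conj : (I : Type) → (I → Conjunct Act τ) → DFormula Act τ
  | stableConj : (I : Type) → (I → Conjunct Act τ) → DFormula Act τ
  | branchConj : (α : Act) → Formula Act τ → (I : Type) → (I → Conjunct Act τ) → DFormula Act τ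

/-- Conjuncts `ψ`: positive `⟨ε⟩χ` or negative `¬⟨ε⟩χ`. -/
inductive Conjunct (Act : Type) (τ : Act) : Type 1
  | pos : DFormula Act τ → Conjunct Act τ
  | neg : DFormula Act τ → Conjunct Act τ
end

section Semantics

variable {Proc Act : Type}

mutual
/-- Semantics `⟦φ⟧`. -/
def Sat (Tr : Proc → Act → Proc → Prop) (τ : Act) (p : Proc) : Formula Act τ → Prop
  | .delayed χ => ∃ p', Star Tr τ p p' ∧ SatD Tr τ p' χ
  | .conj _ ps => ∀ i, SatC Tr τ p (ps i)

/-- Semantics `⟦χ⟧^ε` of delayed formulas. -/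
def SatD (Tr : Proc → Act → Proc → Prop) (τ : Act) (p : Proc) : DFormula Act τ → Prop
  | .obs a _ φ => ∃ p', Tr p a p' ∧ Sat Tr τ p' φ
  | .conj _ ps => ∀ i, SatC Tr τ p (ps i)
  | .stableConj _ ps => Stable Tr τ p ∧ ∀ i, SatC Tr τ p (ps i)
  | .branchConj α φ _ ps =>
      (∃ p', OptStep Tr τ p α p' ∧ Sat Tr τ p' φ) ∧ ∀ i, SatC Tr τ p (ps i)

/-- Semantics `⟦ψ⟧^∧` of conjuncts. -/
def SatC (Tr : Proc → Act → Proc → Prop) (τ : Act) (p : Proc) : Conjunct Act τ → Prop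
  | .pos χ => ∃ p', Star Tr τ p p' ∧ SatD Tr τ p' χ
  | .neg χ => ¬ ∃ p', Star Tr τ p p' ∧ SatD Tr τ p' χ
end

/-- `φ` distinguishes `p` from the set `Q`. -/
def Distinguishes (Tr : Proc → Act → Proc → Prop) (τ : Act) (φ : Formula Act τ)
    (p : Proc) (Q : Set Proc) : Prop :=
  Sat Tr τ p φ ∧ ∀ q ∈ Q, ¬ Sat Tr τ q φ

/-- The delayed formula `χ` distinguishes `p` from the set `Q` w.r.t. `⟦·⟧^ε`. -/
def DistinguishesD (Tr : Proc → Act → Proc → Prop) (τ : Act) (χ : DFormula Act τ)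
    (p : Proc) (Q : Set Proc) : Prop :=
  SatD Tr τ p χ ∧ ∀ q ∈ Q, ¬ SatD Tr τ q χ

/-- The conjunct `ψ` distinguishes `p` from `q` w.r.t. `⟦·⟧^∧`. -/
def DistinguishesC (Tr : Proc → Act → Proc → Prop) (τ : Act) (ψ : Conjunct Act τ)
    (p q : Proc) : Prop :=
  SatC Tr τ p ψ ∧ ¬ SatC Tr τ q ψ

/-- Stability-respecting branching bisimulations: symmetric relations with the
branching-bisimulation transfer property and the stability-respecting
property. -/
def IsSRBBisim (Tr : Proc → Act → Proc → Prop) (τ : Act) (R : Proc → Proc → Prop) : Prop :=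
  Symmetric R ∧
  (∀ p q, R p q → ∀ α p', Tr p α p' →
    (α = τ ∧ R p' q) ∨
      ∃ q' q'', Star Tr τ q q' ∧ Tr q' α q'' ∧ R p q' ∧ R p' q'') ∧
  (∀ p q, R p q → Stable Tr τ p →
    ∃ q', Star Tr τ q q' ∧ Stable Tr τ q' ∧ R p q')

end Semantics

/-! ### Expressiveness prices -/

section Expr

variable {Act : Type} {τ : Act}

mutual
/-- Expressiveness price `expr` of formulas. -/
def exprF : Formula Act τ → Energy
  | .delayed χ => exprE χ
  | .conj I ps => ⨆ _ : Nonempty I, ((unitE 4 + unitE 2) + ⨆ i, exprC (ps i))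

/-- Expressiveness price `expr^ε` of delayed formulas. -/
def exprE : DFormula Act τ → Energy
  | .obs _ _ φ => unitE 0 + exprF φ
  | .conj I ps => ⨆ _ : Nonempty I, (unitE 2 + ⨆ i, exprC (ps i))
  | .stableConj _ ps => unitE 3 + ⨆ i, exprC (ps i)
  | .branchConj _ φ _ ps =>
      (unitE 1 + unitE 2) +
        (((unitE 0 + exprF φ) ⊔ onlyAt 5 (1 + exprF φ 0)) ⊔ ⨆ i, exprC (ps i))

/-- Expressiveness price `expr^∧` of conjuncts. -/
def exprC : Conjunct Act τ → Energy
  | .pos χ => exprE χ ⊔ onlyAt 5 (exprE χ 0)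
  | .neg χ => (unitE 7 + exprE χ) ⊔ onlyAt 6 (exprE χ 0)
end

end Expr

/-! ### The weak spectroscopy energy game -/

/-- Positions of the weak spectroscopy game. -/
inductive GPos (Proc Act : Type) : Type
  | att (p : Proc) (Q : Set Proc)                                 -- `[p,Q]_a`
  | attD (p : Proc) (Q : Set Proc)                                -- `[p,Q]^ε_a`
  | attC (p q : Proc)                                             -- `[p,q]^∧_a`
  | attB (p : Proc) (Q : Set Proc)                                -- `[p,Q]^η_a`
  | defC (p : Proc) (Q : Set Proc)                                -- `(p,Q)_d`
  | defS (p : Proc) (Q : Set Proc)                                -- `(p,Q)^s_d`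
  | defB (p : Proc) (α : Act) (p' : Proc) (Q Qa : Set Proc)       -- `(p,α,p',Q,Qa)^η_d`

/-- The zero update. -/
def zeroU : Update := fun _ => UpdComp.zero

/-- The update `-ê_i`. -/
def decU (i : Fin 8) : Update := fun k => if k = i then UpdComp.decr else UpdComp.zero

/-- The update `(min_{1,6},0,0,0,0,0,0,0)`. -/
def minU16 : Update := fun k => if k = 0 then UpdComp.minWith {5} else UpdComp.zero

/-- The update `(min_{1,7},0,0,0,0,0,0,-1)`. -/
def minU17dec8 : Update := fun k =>
  if k = 0 then UpdComp.minWith {6} else if k = 7 then UpdComp.decr else UpdComp.zero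

/-- The update `(0,-1,-1,0,0,0,0,0)`. -/
def dec23 : Update := fun k => if k = 1 ∨ k = 2 then UpdComp.decr else UpdComp.zero

/-- The update `(min_{1,6},-1,-1,0,0,0,0,0)`. -/
def minU16dec23 : Update := fun k =>
  if k = 0 then UpdComp.minWith {5}
  else if k = 1 ∨ k = 2 then UpdComp.decr else UpdComp.zero

section Game

variable {Proc Act : Type}

/-- Moves of the weak spectroscopy game. -/
inductive GMove (Tr : Proc → Act → Proc → Prop) (τ : Act) :
    GPos Proc Act → Update → GPos Proc Act → Prop
  | delay {p : Proc} {Q Q' : Set Proc} :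
      SetStar Tr τ Q Q' →
      GMove Tr τ (.att p Q) zeroU (.attD p Q')
  | procrastination {p p' : Proc} {Q : Set Proc} :
      Tr p τ p' → p ≠ p' →
      GMove Tr τ (.attD p Q) zeroU (.attD p' Q)
  | observation {p p' : Proc} {a : Act} {Q Q' : Set Proc} :
      Tr p a p' → a ≠ τ → SetStep Tr Q a Q' →
      GMove Tr τ (.attD p Q) (decU 0) (.att p' Q')
  | finishing {p : Proc} :
      GMove Tr τ (.att p ∅) zeroU (.defC p ∅)
  | immediateConj {p : Proc} {Q : Set Proc} :
      Q ≠ ∅ →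
      GMove Tr τ (.att p Q) (decU 4) (.defC p Q)
  | lateConj {p : Proc} {Q : Set Proc} :
      GMove Tr τ (.attD p Q) zeroU (.defC p Q)
  | conjAnswer {p q : Proc} {Q : Set Proc} :
      q ∈ Q →
      GMove Tr τ (.defC p Q) (decU 2) (.attC p q)
  | posConjunct {p q : Proc} {Q : Set Proc} :
      SetStar Tr τ {q} Q →
      GMove Tr τ (.attC p q) minU16 (.attD p Q)
  | negConjunct {p q : Proc} {Q : Set Proc} :
      SetStar Tr τ {p} Q → p ≠ q →
      GMove Tr τ (.attC p q) minU17dec8 (.attD q Q)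
  | stableConj {p : Proc} {Q : Set Proc} :
      Stable Tr τ p →
      GMove Tr τ (.attD p Q) zeroU (.defS p {q ∈ Q | Stable Tr τ q})
  | conjStableAnswer {p q : Proc} {Q : Set Proc} :
      q ∈ Q →
      GMove Tr τ (.defS p Q) (decU 3) (.attC p q)
  | stableFinishing {p : Proc} :
      GMove Tr τ (.defS p ∅) (decU 3) (.defC p ∅)
  | branchConj {p p' : Proc} {α : Act} {Q Qa : Set Proc} :
      OptStep Tr τ p α p' → Qa ⊆ Q →
      GMove Tr τ (.attD p Q) zeroU (.defB p α p' (Q \ Qa) Qa)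
  | branchAnswer {p p' q : Proc} {α : Act} {Q Qa : Set Proc} :
      q ∈ Q →
      GMove Tr τ (.defB p α p' Q Qa) dec23 (.attC p q)
  | branchObservation {p p' : Proc} {α : Act} {Q Qa Q' : Set Proc} :
      SetOpt Tr τ Qa α Q' →
      GMove Tr τ (.defB p α p' Q Qa) minU16dec23 (.attB p' Q')
  | branchAccounting {p : Proc} {Q : Set Proc} :
      GMove Tr τ (.attB p Q) (decU 0) (.att p Q)

/-- Defender positions of the weak spectroscopy game. -/
def isDefender : GPos Proc Act → Prop
  | .defC _ _ => True
  | .defS _ _ => True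
  | .defB _ _ _ _ _ => True
  | _ => False

/-- The weak spectroscopy energy game `G△`. -/
def specGame (Tr : Proc → Act → Proc → Prop) (τ : Act) : EGame (GPos Proc Act) where
  defender := isDefender
  move := GMove Tr τ

end Game

/-! ### Strategy formulas -/

section Strat

variable {Proc Act : Type}

mutual
/-- Attacker strategy formulas (formula sort). -/
inductive StratF (Tr : Proc → Act → Proc → Prop) (τ : Act) :
    GPos Proc Act → Energy → Formula Act τ → Prop
  | delay {p : Proc} {Q Q' : Set Proc} {u : Update} {e e' : Energy} {χ : DFormula Act τ} :
      GMove Tr τ (.att p Q) u (.attD p Q') →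
      upd e u = some e' →
      (specGame Tr τ).Win (.attD p Q') e' →
      StratD Tr τ (.attD p Q') e' χ →
      StratF Tr τ (.att p Q) e (.delayed χ)
  | immediateConj {p : Proc} {Q : Set Proc} {u : Update} {e e' : Energy}
      {I : Type} {ps : I → Conjunct Act τ} :
      GMove Tr τ (.att p Q) u (.defC p Q) →
      upd e u = some e' →
      (specGame Tr τ).Win (.defC p Q) e' →
      StratD Tr τ (.defC p Q) e' (.conj I ps) →
      StratF Tr τ (.att p Q) e (.conj I ps)

/-- Attacker strategy formulas (delayed-formula sort). -/
inductive StratD (Tr : Proc → Act → Proc → Prop) (τ : Act) :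
    GPos Proc Act → Energy → DFormula Act τ → Prop
  | procrastination {p p' : Proc} {Q : Set Proc} {u : Update} {e e' : Energy}
      {χ : DFormula Act τ} :
      GMove Tr τ (.attD p Q) u (.attD p' Q) →
      upd e u = some e' →
      (specGame Tr τ).Win (.attD p' Q) e' →
      StratD Tr τ (.attD p' Q) e' χ →
      StratD Tr τ (.attD p Q) e χ
  | observation {p p' : Proc} {a : Act} {Q Q' : Set Proc} {u : Update} {e e' : Energy}
      {φ : Formula Act τ} (ha : a ≠ τ) :
      GMove Tr τ (.attD p Q) u (.att p' Q') →
      Tr p a p' → SetStep Tr Q a Q' →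
      upd e u = some e' →
      (specGame Tr τ).Win (.att p' Q') e' →
      StratF Tr τ (.att p' Q') e' φ →
      StratD Tr τ (.attD p Q) e (.obs a ha φ)
  | lateConj {p : Proc} {Q : Set Proc} {u : Update} {e e' : Energy} {χ : DFormula Act τ} :
      GMove Tr τ (.attD p Q) u (.defC p Q) →
      upd e u = some e' →
      (specGame Tr τ).Win (.defC p Q) e' →
      StratD Tr τ (.defC p Q) e' χ →
      StratD Tr τ (.attD p Q) e χ
  | stable {p : Proc} {Q Q' : Set Proc} {u : Update} {e e' : Energy} {χ : DFormula Act τ} :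
      GMove Tr τ (.attD p Q) u (.defS p Q') →
      upd e u = some e' →
      (specGame Tr τ).Win (.defS p Q') e' →
      StratD Tr τ (.defS p Q') e' χ →
      StratD Tr τ (.attD p Q) e χ
  | branch {p p' : Proc} {α : Act} {Q Q' Qa : Set Proc} {u : Update} {e e' : Energy}
      {χ : DFormula Act τ} :
      GMove Tr τ (.attD p Q) u (.defB p α p' Q' Qa) →
      upd e u = some e' →
      (specGame Tr τ).Win (.defB p α p' Q' Qa) e' →
      StratD Tr τ (.defB p α p' Q' Qa) e' χ →
      StratD Tr τ (.attD p Q) e χ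
  | conj {p : Proc} {Q : Set Proc} {e : Energy}
      (us : {q // q ∈ Q} → Update) (es : {q // q ∈ Q} → Energy)
      (ψs : {q // q ∈ Q} → Conjunct Act τ) :
      (∀ qq : {q // q ∈ Q}, GMove Tr τ (.defC p Q) (us qq) (.attC p qq.1)) →
      (∀ qq : {q // q ∈ Q}, upd e (us qq) = some (es qq)) →
      (∀ qq : {q // q ∈ Q}, (specGame Tr τ).Win (.attC p qq.1) (es qq)) →
      (∀ qq : {q // q ∈ Q}, StratC Tr τ (.attC p qq.1) (es qq) (ψs qq)) →
      StratD Tr τ (.defC p Q) e (.conj {q // q ∈ Q} ψs)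
  | stableConj {p : Proc} {Q : Set Proc} {e : Energy}
      (hne : Q.Nonempty)
      (us : {q // q ∈ Q} → Update) (es : {q // q ∈ Q} → Energy)
      (ψs : {q // q ∈ Q} → Conjunct Act τ) :
      (∀ qq : {q // q ∈ Q}, GMove Tr τ (.defS p Q) (us qq) (.attC p qq.1)) →
      (∀ qq : {q // q ∈ Q}, upd e (us qq) = some (es qq)) →
      (∀ qq : {q // q ∈ Q}, (specGame Tr τ).Win (.attC p qq.1) (es qq)) →
      (∀ qq : {q // q ∈ Q}, StratC Tr τ (.attC p qq.1) (es qq) (ψs qq)) →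
      StratD Tr τ (.defS p Q) e (.stableConj {q // q ∈ Q} ψs)
  | stableFinish {p : Proc} {u : Update} {e e' : Energy} :
      GMove Tr τ (.defS p ∅) u (.defC p ∅) →
      upd e u = some e' →
      (specGame Tr τ).Win (.defC p (∅ : Set Proc)) e' →
      StratD Tr τ (.defS p ∅) e (.stableConj Empty fun x => x.elim)
  | branchConj {p p' : Proc} {α : Act} {Q Qa Q' : Set Proc} {ua ua' : Update}
      {e e1 ea : Energy} {φa : Formula Act τ}
      (us : {q // q ∈ Q} → Update) (es : {q // q ∈ Q} → Energy)
      (ψs : {q // q ∈ Q} → Conjunct Act τ) :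
      GMove Tr τ (.defB p α p' Q Qa) ua (.attB p' Q') →
      GMove Tr τ (.attB p' Q') ua' (.att p' Q') →
      upd e ua = some e1 →
      upd e1 ua' = some ea →
      (specGame Tr τ).Win (.att p' Q') ea →
      StratF Tr τ (.att p' Q') ea φa →
      (∀ qq : {q // q ∈ Q}, GMove Tr τ (.defB p α p' Q Qa) (us qq) (.attC p qq.1)) →
      (∀ qq : {q // q ∈ Q}, upd e (us qq) = some (es qq)) →
      (∀ qq : {q // q ∈ Q}, (specGame Tr τ).Win (.attC p qq.1) (es qq)) →
      (∀ qq : {q // q ∈ Q}, StratC Tr τ (.attC p qq.1) (es qq) (ψs qq)) →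
      StratD Tr τ (.defB p α p' Q Qa) e (.branchConj α φa {q // q ∈ Q} ψs)

/-- Attacker strategy formulas (conjunct sort). -/
inductive StratC (Tr : Proc → Act → Proc → Prop) (τ : Act) :
    GPos Proc Act → Energy → Conjunct Act τ → Prop
  | pos {p q : Proc} {Q' : Set Proc} {u : Update} {e e' : Energy} {χ : DFormula Act τ} :
      GMove Tr τ (.attC p q) u (.attD p Q') →
      upd e u = some e' →
      (specGame Tr τ).Win (.attD p Q') e' →
      StratD Tr τ (.attD p Q') e' χ →
      StratC Tr τ (.attC p q) e (.pos χ)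
  | neg {p q : Proc} {P' : Set Proc} {u : Update} {e e' : Energy} {χ : DFormula Act τ} :
      GMove Tr τ (.attC p q) u (.attD q P') →
      upd e u = some e' →
      (specGame Tr τ).Win (.attD q P') e' →
      StratD Tr τ (.attD q P') e' χ →
      StratC Tr τ (.attC p q) e (.neg χ)
end

end Strat


section ProofAux

variable {Proc Act : Type} {Tr : Proc → Act → Proc → Prop} {τ : Act}

theorem setStar_mem {Q Q' : Set Proc} (hs : SetStar Tr τ Q Q') {q q' : Proc}
    (hq : q ∈ Q) (h : Star Tr τ q q') : q' ∈ Q' := by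
  simp only [SetStar] at hs; subst hs; exact ⟨q, hq, h⟩

theorem setStep_mem {Q Q' : Set Proc} {a : Act} (hs : SetStep Tr Q a Q') {q q' : Proc}
    (hq : q ∈ Q) (h : Tr q a q') : q' ∈ Q' := by
  simp only [SetStep] at hs; subst hs; exact ⟨q, hq, h⟩

theorem setOpt_mem {Q Q' : Set Proc} {α : Act} (hs : SetOpt Tr τ Q α Q') {q q' : Proc}
    (hq : q ∈ Q) (h : OptStep Tr τ q α q') : q' ∈ Q' := by
  simp only [SetOpt] at hs; subst hs; exact ⟨q, hq, h⟩

/-- The combined induction motive for delayed formulas at the various game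
positions. -/
def MD (Tr : Proc → Act → Proc → Prop) (τ : Act) (g : GPos Proc Act)
    (χ : DFormula Act τ) : Prop :=
  (∀ p Q, g = .attD p Q →
     (∃ p'', Star Tr τ p p'' ∧ SatD Tr τ p'' χ) ∧ ∀ q ∈ Q, ¬ SatD Tr τ q χ) ∧
  (∀ p Q, g = .defC p Q → SatD Tr τ p χ ∧ ∀ q ∈ Q, ¬ SatD Tr τ q χ) ∧
  (∀ p Q, g = .defS p Q →
     (Stable Tr τ p → SatD Tr τ p χ) ∧
       ∀ q, (q ∈ Q ∨ ¬ Stable Tr τ q) → ¬ SatD Tr τ q χ) ∧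
  (∀ p α p' Qd Qa, g = .defB p α p' Qd Qa →
     (OptStep Tr τ p α p' → SatD Tr τ p χ) ∧ ∀ q ∈ Qd ∪ Qa, ¬ SatD Tr τ q χ)

theorem mdAttD {Tr : Proc → Act → Proc → Prop} {τ : Act} {p : Proc} {Q : Set Proc}
    {χ : DFormula Act τ}
    (hpos : ∃ p'', Star Tr τ p p'' ∧ SatD Tr τ p'' χ)
    (hneg : ∀ q ∈ Q, ¬ SatD Tr τ q χ) : MD Tr τ (.attD p Q) χ := by
  refine ⟨?_, ?_, ?_, ?_⟩
  · rintro p1 Q1 h; injection h with h1 h2; subst h1; subst h2; exact ⟨hpos, hneg⟩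
  · rintro p1 Q1 h; cases h
  · rintro p1 Q1 h; cases h
  · rintro p1 α1 p1' Qd Qa h; cases h

theorem mdDefC {Tr : Proc → Act → Proc → Prop} {τ : Act} {p : Proc} {Q : Set Proc}
    {χ : DFormula Act τ}
    (hpos : SatD Tr τ p χ)
    (hneg : ∀ q ∈ Q, ¬ SatD Tr τ q χ) : MD Tr τ (.defC p Q) χ := by
  refine ⟨?_, ?_, ?_, ?_⟩
  · rintro p1 Q1 h; cases h
  · rintro p1 Q1 h; injection h with h1 h2; subst h1; subst h2; exact ⟨hpos, hneg⟩
  · rintro p1 Q1 h; cases h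
  · rintro p1 α1 p1' Qd Qa h; cases h

theorem mdDefS {Tr : Proc → Act → Proc → Prop} {τ : Act} {p : Proc} {Q : Set Proc}
    {χ : DFormula Act τ}
    (hpos : Stable Tr τ p → SatD Tr τ p χ)
    (hneg : ∀ q, (q ∈ Q ∨ ¬ Stable Tr τ q) → ¬ SatD Tr τ q χ) :
    MD Tr τ (.defS p Q) χ := by
  refine ⟨?_, ?_, ?_, ?_⟩
  · rintro p1 Q1 h; cases h
  · rintro p1 Q1 h; cases h
  · rintro p1 Q1 h; injection h with h1 h2; subst h1; subst h2; exact ⟨hpos, hneg⟩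
  · rintro p1 α1 p1' Qd Qa h; cases h

theorem mdDefB {Tr : Proc → Act → Proc → Prop} {τ : Act} {p p' : Proc} {α : Act}
    {Qd Qa : Set Proc} {χ : DFormula Act τ}
    (hpos : OptStep Tr τ p α p' → SatD Tr τ p χ)
    (hneg : ∀ q ∈ Qd ∪ Qa, ¬ SatD Tr τ q χ) : MD Tr τ (.defB p α p' Qd Qa) χ := by
  refine ⟨?_, ?_, ?_, ?_⟩
  · rintro p1 Q1 h; cases h
  · rintro p1 Q1 h; cases h
  · rintro p1 Q1 h; cases h
  · rintro p1 α1 p1' Qd1 Qa1 h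
    injection h with h1 h2 h3 h4 h5
    subst h1; subst h2; subst h3; subst h4; subst h5
    exact ⟨hpos, hneg⟩

theorem mdAttD_elim {Tr : Proc → Act → Proc → Prop} {τ : Act} {p : Proc} {Q : Set Proc}
    {χ : DFormula Act τ} (h : MD Tr τ (.attD p Q) χ) :
    (∃ p'', Star Tr τ p p'' ∧ SatD Tr τ p'' χ) ∧ ∀ q ∈ Q, ¬ SatD Tr τ q χ :=
  h.1 p Q rfl

theorem mdDefC_elim {Tr : Proc → Act → Proc → Prop} {τ : Act} {p : Proc} {Q : Set Proc}
    {χ : DFormula Act τ} (h : MD Tr τ (.defC p Q) χ) :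
    SatD Tr τ p χ ∧ ∀ q ∈ Q, ¬ SatD Tr τ q χ :=
  h.2.1 p Q rfl

theorem mdDefS_elim {Tr : Proc → Act → Proc → Prop} {τ : Act} {p : Proc} {Q : Set Proc}
    {χ : DFormula Act τ} (h : MD Tr τ (.defS p Q) χ) :
    (Stable Tr τ p → SatD Tr τ p χ) ∧
      ∀ q, (q ∈ Q ∨ ¬ Stable Tr τ q) → ¬ SatD Tr τ q χ :=
  h.2.2.1 p Q rfl

theorem mdDefB_elim {Tr : Proc → Act → Proc → Prop} {τ : Act} {p p' : Proc} {α : Act}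
    {Qd Qa : Set Proc} {χ : DFormula Act τ} (h : MD Tr τ (.defB p α p' Qd Qa) χ) :
    (OptStep Tr τ p α p' → SatD Tr τ p χ) ∧ ∀ q ∈ Qd ∪ Qa, ¬ SatD Tr τ q χ :=
  h.2.2.2 p α p' Qd Qa rfl

end ProofAux

/-- strategy formulas at `[p,Q]_a` distinguish `p` from `Q`. -/
theorem strategy_formula_distinguishes {Proc Act : Type}
    (Tr : Proc → Act → Proc → Prop) (τ : Act) (p : Proc) (Q : Set Proc) (e : Energy)
    (φ : Formula Act τ) (h : StratF Tr τ (.att p Q) e φ) :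
    Distinguishes Tr τ φ p Q := by
  refine (StratF.rec (Tr := Tr) (τ := τ)
    (motive_1 := fun g _ φ _ => ∀ p Q, g = GPos.att p Q → Distinguishes Tr τ φ p Q)
    (motive_2 := fun g _ χ _ => MD Tr τ g χ)
    (motive_3 := fun g _ ψ _ => ∀ p q, g = GPos.attC p q →
      SatC Tr τ p ψ ∧ ¬ SatC Tr τ q ψ)
    ?_ ?_ ?_ ?_ ?_ ?_ ?_ ?_ ?_ ?_ ?_ ?_ ?_ h) p Q rfl
  -- StratF.delay
  · intro p Q Q' u e e' χ hm hu hw hs ih p1 Q1 hEq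
    injection hEq with h1 h2; subst h1; subst h2
    cases hm with
    | delay hstar =>
      obtain ⟨⟨p'', hst, hsat⟩, hneg⟩ := mdAttD_elim ih
      refine ⟨⟨p'', hst, hsat⟩, fun q hq hsq => ?_⟩
      simp only [Sat] at hsq
      obtain ⟨q', hsq', hsatq'⟩ := hsq
      exact hneg q' (setStar_mem hstar hq hsq') hsatq'
  -- StratF.immediateConj
  · intro p Q u e e' I ps hm hu hw hs ih p1 Q1 hEq
    injection hEq with h1 h2; subst h1; subst h2
    obtain ⟨hpos, hneg⟩ := mdDefC_elim ih
    simp only [SatD] at hpos hneg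
    exact ⟨hpos, fun q hq hsq => hneg q hq (by simpa [Sat] using hsq)⟩
  -- StratD.procrastination
  · intro p p' Q u e e' χ hm hu hw hs ih
    cases hm with
    | procrastination htr hne =>
      obtain ⟨⟨p'', hst, hsat⟩, hneg⟩ := mdAttD_elim ih
      exact mdAttD ⟨p'', Relation.ReflTransGen.head htr hst, hsat⟩ hneg
  -- StratD.observation
  · intro p p' a Q Q' u e e' φ ha hm htr hstep hu hw hsf ih
    obtain ⟨hpos, hneg⟩ := ih p' Q' rfl
    refine mdAttD ⟨p, Relation.ReflTransGen.refl, ⟨p', htr, hpos⟩⟩ ?_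
    intro q hq hsq
    simp only [SatD] at hsq
    obtain ⟨q', htrq, hsatq⟩ := hsq
    exact hneg q' (setStep_mem hstep hq htrq) hsatq
  -- StratD.lateConj
  · intro p Q u e e' χ hm hu hw hs ih
    obtain ⟨hpos, hneg⟩ := mdDefC_elim ih
    exact mdAttD ⟨p, Relation.ReflTransGen.refl, hpos⟩ hneg
  -- StratD.stable
  · intro p Q Q' u e e' χ hm hu hw hs ih
    cases hm with
    | stableConj hstab =>
      obtain ⟨hpos, hneg⟩ := mdDefS_elim ih
      refine mdAttD ⟨p, Relation.ReflTransGen.refl, hpos hstab⟩ ?_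
      intro q hq hsq
      by_cases hqs : Stable Tr τ q
      · exact hneg q (Or.inl ⟨hq, hqs⟩) hsq
      · exact hneg q (Or.inr hqs) hsq
  -- StratD.branch
  · intro p p' α Q Q' Qa u e e' χ hm hu hw hs ih
    cases hm with
    | branchConj hopt hsub =>
      obtain ⟨hpos, hneg⟩ := mdDefB_elim ih
      refine mdAttD ⟨p, Relation.ReflTransGen.refl, hpos hopt⟩ ?_
      intro q hq hsq
      by_cases hqa : q ∈ Qa
      · exact hneg q (Or.inr hqa) hsq
      · exact hneg q (Or.inl ⟨hq, hqa⟩) hsq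
  -- StratD.conj
  · intro p Q e us es ψs hmv hupd hwin hstr ih
    refine mdDefC ?_ ?_
    · simp only [SatD]
      exact fun qq => (ih qq p qq.1 rfl).1
    · intro q hq hsq
      simp only [SatD] at hsq
      exact (ih ⟨q, hq⟩ p q rfl).2 (hsq ⟨q, hq⟩)
  -- StratD.stableConj
  · intro p Q e hne us es ψs hmv hupd hwin hstr ih
    refine mdDefS ?_ ?_
    · intro hstab
      simp only [SatD]
      exact ⟨hstab, fun qq => (ih qq p qq.1 rfl).1⟩
    · intro q hq hsq
      simp only [SatD] at hsq
      rcases hq with hq | hq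
      · exact (ih ⟨q, hq⟩ p q rfl).2 (hsq.2 ⟨q, hq⟩)
      · exact hq hsq.1
  -- StratD.stableFinish
  · intro p u e e' hm hu hw
    refine mdDefS ?_ ?_
    · intro hstab
      simp only [SatD]
      exact ⟨hstab, fun i => i.elim⟩
    · intro q hq hsq
      simp only [SatD] at hsq
      rcases hq with hq | hq
      · exact absurd hq (Set.notMem_empty q)
      · exact hq hsq.1
  -- StratD.branchConj
  · intro p p' α Q Qa Q' ua ua' e e1 ea φa us es ψs hma hma' hu1 hu2 hwa hsa
      hmv hupd hwin hstr ihF ihC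
    cases hma with
    | branchObservation hopt =>
      obtain ⟨hposF, hnegF⟩ := ihF p' Q' rfl
      refine mdDefB ?_ ?_
      · intro hstep
        simp only [SatD]
        exact ⟨⟨p', hstep, hposF⟩, fun qq => (ihC qq p qq.1 rfl).1⟩
      · intro q hq hsq
        simp only [SatD] at hsq
        rcases hq with hq | hq
        · exact (ihC ⟨q, hq⟩ p q rfl).2 (hsq.2 ⟨q, hq⟩)
        · obtain ⟨q'', hst, hsat⟩ := hsq.1
          exact hnegF q'' (setOpt_mem hopt hq hst) hsat
  -- StratC.pos
  · intro p q Q' u e e' χ hm hu hw hs ih p1 q1 hEq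
    injection hEq with h1 h2; subst h1; subst h2
    cases hm with
    | posConjunct hstar =>
      obtain ⟨hpos, hneg⟩ := mdAttD_elim ih
      constructor
      · simpa only [SatC] using hpos
      · intro hsq
        simp only [SatC] at hsq
        obtain ⟨q', hst, hsat⟩ := hsq
        exact hneg q' (setStar_mem hstar rfl hst) hsat
    | negConjunct hstar hne => exact absurd rfl hne
  -- StratC.neg
  · intro p q P' u e e' χ hm hu hw hs ih p1 q1 hEq
    injection hEq with h1 h2; subst h1; subst h2
    obtain ⟨⟨q'', hst, hsat⟩, hneg⟩ := mdAttD_elim ih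
    cases hm with
    | posConjunct hstar =>
      exact absurd hsat (hneg q'' (setStar_mem hstar rfl hst))
    | negConjunct hstar hne =>
      constructor
      · simp only [SatC]
        rintro ⟨x, hx, hsx⟩
        exact hneg x (setStar_mem hstar rfl hx) hsx
      · intro hsq
        simp only [SatC] at hsq
        exact hsq ⟨q'', hst, hsat⟩

end Spectroscopy
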